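/- arXiv:1511.00590 — 7 statements merged into one kernel-verified Lean document; each statement's English description precedes it below -/
import Mathlib

section
/- Define sequences p, p¹, p², p³ : ℕ → ℤ by the initial values p_0 = 1, p¹_0 = 2, p²_0 = 1, p³_0 = 3 and, for n ≥ 1, p_n = 2 p¹_{n-1} + p_{n-1}, p¹_n = p²_n + p³_{n-1}, p²_n = p³_{n-1} + 2 p¹_{n-1}, p³_n = p_n + 2 p³_{n-1}. Then p_0 = 1, p_1 = 5, p_2 = 25 and p_n = 5 p_{n-1} - 4 p_{n-2} + 4 p_{n-3} for all n ≥ 3. -/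
/-!
Eliminating `p²` leaves the linear system `p_{n+1} = p_n + 2 p¹_n`, `p¹_{n+1} = 2 p¹_n + 2 p³_n`,
`p³_{n+1} = p_{n+1} + 2 p³_n`, whose matrix has characteristic polynomial `x³ - 5x² + 4x - 4`;
so by Cayley–Hamilton `p` satisfies the corresponding third-order recurrence.
-/

theorem linear_recurrence_of_system {R : Type*} [CommRing R] (a b d : ℕ → R)
    (ha : ∀ n, a (n + 1) = a n + 2 * b n)
    (hb : ∀ n, b (n + 1) = 2 * b n + 2 * d n)
    (hd : ∀ n, d (n + 1) = a (n + 1) + 2 * d n) (n : ℕ) :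
    a (n + 3) = 5 * a (n + 2) - 4 * a (n + 1) + 4 * a n := by
  linear_combination ha (n + 2) - 4 * ha (n + 1) + 4 * ha n + 2 * hb (n + 1) - 4 * hb n
    + 4 * hd n

theorem stmt_3_general (p p1 p2 p3 : ℕ → ℤ)
    (h0 : p 0 = 1) (h10 : p1 0 = 2) (h30 : p3 0 = 3)
    (hp : ∀ n, 1 ≤ n → p n = 2 * p1 (n - 1) + p (n - 1))
    (hp1 : ∀ n, 1 ≤ n → p1 n = p2 n + p3 (n - 1))
    (hp2 : ∀ n, 1 ≤ n → p2 n = p3 (n - 1) + 2 * p1 (n - 1))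
    (hp3 : ∀ n, 1 ≤ n → p3 n = p n + 2 * p3 (n - 1)) :
    p 0 = 1 ∧ p 1 = 5 ∧ p 2 = 25 ∧
      ∀ n, 3 ≤ n → p n = 5 * p (n - 1) - 4 * p (n - 2) + 4 * p (n - 3) := by
  have ha (n : ℕ) : p (n + 1) = p n + 2 * p1 n := by
    rw [hp (n + 1) n.succ_pos, Nat.add_sub_cancel, add_comm]
  have hb (n : ℕ) : p1 (n + 1) = 2 * p1 n + 2 * p3 n := by
    rw [hp1 (n + 1) n.succ_pos, hp2 (n + 1) n.succ_pos, Nat.add_sub_cancel]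
    ring
  have hd (n : ℕ) : p3 (n + 1) = p (n + 1) + 2 * p3 n := hp3 (n + 1) n.succ_pos
  refine ⟨h0, by linarith [ha 0], by linarith [ha 0, ha 1, hb 0], fun n hn => ?_⟩
  obtain ⟨m, rfl⟩ : ∃ m, n = m + 3 := ⟨n - 3, by omega⟩
  exact linear_recurrence_of_system p p1 p3 ha hb hd m

theorem stmt_3 (p p1 p2 p3 : ℕ → ℤ)
    (h0 : p 0 = 1) (h10 : p1 0 = 2) (h20 : p2 0 = 1) (h30 : p3 0 = 3)
    (hp : ∀ n, 1 ≤ n → p n = 2 * p1 (n - 1) + p (n - 1))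
    (hp1 : ∀ n, 1 ≤ n → p1 n = p2 n + p3 (n - 1))
    (hp2 : ∀ n, 1 ≤ n → p2 n = p3 (n - 1) + 2 * p1 (n - 1))
    (hp3 : ∀ n, 1 ≤ n → p3 n = p n + 2 * p3 (n - 1)) :
    p 0 = 1 ∧ p 1 = 5 ∧ p 2 = 25 ∧
      ∀ n, 3 ≤ n → p n = 5 * p (n - 1) - 4 * p (n - 2) + 4 * p (n - 3) :=
  stmt_3_general p p1 p2 p3 h0 h10 h30 hp hp1 hp2 hp3
end

section
/- Define sequences m, m¹, m², m³ : ℕ → ℤ by the initial values m_0 = 1, m¹_0 = 2, m²_0 = 1, m³_0 = 3 and, for n ≥ 1, m_n = 2 m¹_{n-1} + m_{n-1}, m²_n = m³_{n-1} + m¹_{n-1} + m²_{n-1} + m_{n-1}, m¹_n = m²_n + m³_{n-1}, m³_n = 2 m³_{n-1} + m¹_{n-1} + m²_{n-1} + m_{n-1} + m²_n. Then m_0 = 1, m_1 = 5, m_2 = 25 and m_n = 6 m_{n-1} - 3 m_{n-2} + 2 m_{n-3} for all n ≥ 3. -/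
/-!
The defining equations give `m3 n = m1 n + m2 n` at every index, after which `(m, m1, m2)`
evolves by the linear map with matrix `[[1,2,0],[1,3,3],[1,2,2]]`. Its characteristic
polynomial is `X^3 - 6X^2 + 3X - 2`, so by Cayley–Hamilton every coordinate, in particular `m`,
satisfies the corresponding third-order recurrence.
-/

theorem recurrence_of_linear_system {R : Type*} [CommRing R] {a b c : ℕ → R}
    (ha : ∀ n, a (n + 1) = 2 * b n + a n)
    (hb : ∀ n, b (n + 1) = a n + 3 * b n + 3 * c n)
    (hc : ∀ n, c (n + 1) = a n + 2 * b n + 2 * c n) (n : ℕ) :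
    a (n + 3) = 6 * a (n + 2) - 3 * a (n + 1) + 2 * a n := by
  have h2 : a (n + 2) = 3 * a n + 8 * b n + 6 * c n := by
    rw [ha (n + 1), ha n, hb n]; ring
  have h3 : a (n + 3) = 17 * a n + 42 * b n + 36 * c n := by
    rw [ha (n + 2), h2, hb (n + 1), ha n, hb n, hc n]; ring
  rw [h3, h2, ha n]; ring

theorem stmt_4 (m m1 m2 m3 : ℕ → ℤ)
    (h0 : m 0 = 1) (h10 : m1 0 = 2) (h20 : m2 0 = 1) (h30 : m3 0 = 3)
    (hm : ∀ n, 1 ≤ n → m n = 2 * m1 (n - 1) + m (n - 1))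
    (hm2 : ∀ n, 1 ≤ n → m2 n = m3 (n - 1) + m1 (n - 1) + m2 (n - 1) + m (n - 1))
    (hm1 : ∀ n, 1 ≤ n → m1 n = m2 n + m3 (n - 1))
    (hm3 : ∀ n, 1 ≤ n →
      m3 n = 2 * m3 (n - 1) + m1 (n - 1) + m2 (n - 1) + m (n - 1) + m2 n) :
    m 0 = 1 ∧ m 1 = 5 ∧ m 2 = 25 ∧
      ∀ n, 3 ≤ n → m n = 6 * m (n - 1) - 3 * m (n - 2) + 2 * m (n - 3) := by
  have hm' : ∀ n, m (n + 1) = 2 * m1 n + m n := fun n => hm (n + 1) n.succ_pos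
  have hm1' : ∀ n, m1 (n + 1) = m2 (n + 1) + m3 n := fun n => hm1 (n + 1) n.succ_pos
  have hm2' : ∀ n, m2 (n + 1) = m3 n + m1 n + m2 n + m n := fun n => hm2 (n + 1) n.succ_pos
  have hm3' : ∀ n, m3 (n + 1) = 2 * m3 n + m1 n + m2 n + m n + m2 (n + 1) :=
    fun n => hm3 (n + 1) n.succ_pos
  -- The successor case needs no induction hypothesis: subtracting `hm1` from `hm3` leaves `hm2`.
  have hsum : ∀ n, m3 n = m1 n + m2 n := by
    rintro (_ | n)
    · rw [h10, h20, h30]; norm_num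
    · linarith [hm1' n, hm2' n, hm3' n]
  have h11 : m1 1 = 10 := by rw [hm1' 0, hm2' 0, h0, h10, h20, h30]; norm_num
  have h1 : m 1 = 5 := by rw [hm' 0, h0, h10]; norm_num
  refine ⟨h0, h1, by rw [hm' 1, h11, h1]; norm_num, fun n hn => ?_⟩
  obtain ⟨k, rfl⟩ := Nat.exists_eq_add_of_le' hn
  refine recurrence_of_linear_system (b := m1) (c := m2) hm' (fun n => ?_) (fun n => ?_) k
  · linarith [hm1' n, hm2' n, hsum n]
  · linarith [hm2' n, hsum n]
end

section
/- Define sequences o, o¹, o², o³ : ℕ → ℤ by o_0 = 1, o¹_0 = 2, o²_0 = 1, o²_1 = 7, o³_0 = 3 and, for n in the appropriate range, o_n = 2 o¹_{n-1} + o_{n-1} (n ≥ 1), o²_n = o³_{n-1} + o²_{n-1} + o_{n-1} + 2 o³_{n-2} (n ≥ 2), o¹_n = o²_n + o³_{n-1} (n ≥ 1), o³_n = o_n + o³_{n-1} + o²_n (n ≥ 1). Then o_0 = 1, o_1 = 5, o_2 = 25 and o_n = 4 o_{n-1} + 4 o_{n-2} + o_{n-3} for all n ≥ 3. -/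
/-!
The relations `o1 = o3 - o` (from the equations for `o1` and `o3`, and `2 = 3 - 1` at `0`) and
`o (n + 1) = 2 * o1 n + o n` give `2 * o3 n = o (n + 1) + o n`, so `o3` is determined by `o`.
Eliminating `o2` yields `o3 (n + 2) = o (n + 2) + 3 * o3 (n + 1) + o3 n`; doubling it and substituting
`2 * o3` turns this into the third-order recurrence for `o`.
-/

section

variable {o o1 o2 o3 : ℕ → ℤ}

theorem o1_eq_o3_sub_o (h0 : o 0 = 1) (h10 : o1 0 = 2) (h30 : o3 0 = 3)
    (ho1 : ∀ n, o1 (n + 1) = o2 (n + 1) + o3 n)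
    (ho3 : ∀ n, o3 (n + 1) = o (n + 1) + o3 n + o2 (n + 1)) (k : ℕ) :
    o1 k = o3 k - o k := by
  cases k with
  | zero => rw [h10, h30, h0]; norm_num
  | succ n => rw [ho1 n, ho3 n]; ring

theorem two_mul_o3_eq (ho : ∀ n, o (n + 1) = 2 * o1 n + o n)
    (ho1 : ∀ k, o1 k = o3 k - o k) (k : ℕ) :
    2 * o3 k = o (k + 1) + o k := by
  rw [ho, ho1]; ring

theorem o2_add_two_eq
    (ho2 : ∀ n, o2 (n + 2) = o3 (n + 1) + o2 (n + 1) + o (n + 1) + 2 * o3 n)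
    (ho3 : ∀ n, o3 (n + 1) = o (n + 1) + o3 n + o2 (n + 1)) (n : ℕ) :
    o2 (n + 2) = 2 * o3 (n + 1) + o3 n := by
  rw [ho2]; linarith [ho3 n]

theorem o3_add_two_eq
    (ho2 : ∀ n, o2 (n + 2) = o3 (n + 1) + o2 (n + 1) + o (n + 1) + 2 * o3 n)
    (ho3 : ∀ n, o3 (n + 1) = o (n + 1) + o3 n + o2 (n + 1)) (n : ℕ) :
    o3 (n + 2) = o (n + 2) + 3 * o3 (n + 1) + o3 n := by
  rw [ho3 (n + 1), o2_add_two_eq ho2 ho3]; ring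

theorem o_add_three_eq (h2o3 : ∀ k, 2 * o3 k = o (k + 1) + o k)
    (ho3 : ∀ n, o3 (n + 2) = o (n + 2) + 3 * o3 (n + 1) + o3 n) (n : ℕ) :
    o (n + 3) = 4 * o (n + 2) + 4 * o (n + 1) + o n := by
  linarith [ho3 n, h2o3 n, h2o3 (n + 1), h2o3 (n + 2)]

end

theorem stmt_5_general (o o1 o2 o3 : ℕ → ℤ)
    (h0 : o 0 = 1) (h10 : o1 0 = 2) (h21 : o2 1 = 7) (h30 : o3 0 = 3)
    (ho : ∀ n, 1 ≤ n → o n = 2 * o1 (n - 1) + o (n - 1))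
    (ho2 : ∀ n, 2 ≤ n → o2 n = o3 (n - 1) + o2 (n - 1) + o (n - 1) + 2 * o3 (n - 2))
    (ho1 : ∀ n, 1 ≤ n → o1 n = o2 n + o3 (n - 1))
    (ho3 : ∀ n, 1 ≤ n → o3 n = o n + o3 (n - 1) + o2 n) :
    o 0 = 1 ∧ o 1 = 5 ∧ o 2 = 25 ∧
      ∀ n, 3 ≤ n → o n = 4 * o (n - 1) + 4 * o (n - 2) + o (n - 3) := by
  have ho' : ∀ n, o (n + 1) = 2 * o1 n + o n := fun n => ho (n + 1) (by omega)
  have ho1' : ∀ n, o1 (n + 1) = o2 (n + 1) + o3 n := fun n => ho1 (n + 1) (by omega)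
  have ho2' : ∀ n, o2 (n + 2) = o3 (n + 1) + o2 (n + 1) + o (n + 1) + 2 * o3 n :=
    fun n => ho2 (n + 2) (by omega)
  have ho3' : ∀ n, o3 (n + 1) = o (n + 1) + o3 n + o2 (n + 1) := fun n => ho3 (n + 1) (by omega)
  have h2o3 := two_mul_o3_eq ho' (o1_eq_o3_sub_o h0 h10 h30 ho1' ho3')
  have h1 : o 1 = 5 := by rw [ho' 0, h10, h0]; norm_num
  have h2 : o 2 = 25 := by linarith [h2o3 1, ho3' 0, h1, h30, h21]
  refine ⟨h0, h1, h2, fun n hn => ?_⟩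
  obtain ⟨m, rfl⟩ : ∃ m, n = m + 3 := ⟨n - 3, by omega⟩
  exact o_add_three_eq h2o3 (o3_add_two_eq ho2' ho3') m

theorem stmt_5 (o o1 o2 o3 : ℕ → ℤ)
    (h0 : o 0 = 1) (h10 : o1 0 = 2) (h20 : o2 0 = 1) (h21 : o2 1 = 7) (h30 : o3 0 = 3)
    (ho : ∀ n, 1 ≤ n → o n = 2 * o1 (n - 1) + o (n - 1))
    (ho2 : ∀ n, 2 ≤ n → o2 n = o3 (n - 1) + o2 (n - 1) + o (n - 1) + 2 * o3 (n - 2))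
    (ho1 : ∀ n, 1 ≤ n → o1 n = o2 n + o3 (n - 1))
    (ho3 : ∀ n, 1 ≤ n → o3 n = o n + o3 (n - 1) + o2 n) :
    o 0 = 1 ∧ o 1 = 5 ∧ o 2 = 25 ∧
      ∀ n, 3 ≤ n → o n = 4 * o (n - 1) + 4 * o (n - 2) + o (n - 3) :=
  stmt_5_general o o1 o2 o3 h0 h10 h21 h30 ho ho2 ho1 ho3
end

section
/- Let p, m, o : ℕ → ℤ be defined by p_0 = m_0 = o_0 = 1, p_1 = m_1 = o_1 = 5, p_2 = m_2 = o_2 = 25, and for n ≥ 3: p_n = 5 p_{n-1} - 4 p_{n-2} + 4 p_{n-3}, o_n = 4 o_{n-1} + 4 o_{n-2} + o_{n-3}, m_n = 6 m_{n-1} - 3 m_{n-2} + 2 m_{n-3}. Then for all n, p_n ≤ o_n ≤ m_n. -/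
/-!
All three sequences start 1, 5, 25. From index 2 on, the para-chain sequence grows by a factor
at most 9/2 per step while the ortho-chain sequence grows by at least 9/2, and the ortho-chain
sequence grows by at most 5 while the meta-chain sequence grows by at least 5; comparing growth
ratios then gives `p ≤ o ≤ m`. Each growth bound follows from its recurrence once a
three-term window of lower bounds is carried along by induction.
-/

theorem le_of_mul_succ_le {R : Type*} [Semiring R] [LinearOrder R] [IsStrictOrderedRing R]
    {a b : ℕ → R} {c d : R} (hc : 0 < c) (hd : 0 ≤ d) (h₀ : a 0 ≤ b 0)
    (ha : ∀ n, c * a (n + 1) ≤ d * a n) (hb : ∀ n, d * b n ≤ c * b (n + 1)) (n : ℕ) :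
    a n ≤ b n := by
  induction n with
  | zero => exact h₀
  | succ n ih =>
    refine le_of_mul_le_mul_left ?_ hc
    calc c * a (n + 1) ≤ d * a n := ha n
      _ ≤ d * b n := mul_le_mul_of_nonneg_left ih hd
      _ ≤ c * b (n + 1) := hb n

section Para

variable {p : ℕ → ℤ}

theorem para_nonneg_and_four_mul_le_succ (hp0 : p 0 = 1) (hp1 : p 1 = 5) (hp2 : p 2 = 25)
    (hp : ∀ n, p (n + 3) = 5 * p (n + 2) - 4 * p (n + 1) + 4 * p n) (n : ℕ) :
    0 ≤ p n ∧ 4 * p n ≤ p (n + 1) := by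
  have window : ∀ n, 0 ≤ p n ∧ 4 * p n ≤ p (n + 1) ∧ 4 * p (n + 1) ≤ p (n + 2) := by
    intro n
    induction n with
    | zero => simp only [hp0, hp1, hp2]; norm_num
    | succ n ih =>
      obtain ⟨h₀, h₁, h₂⟩ := ih
      exact ⟨by linarith, h₂, by linarith [hp n]⟩
  exact ⟨(window n).1, (window n).2.1⟩

theorem para_succ_le_five_mul (hp0 : p 0 = 1) (hp1 : p 1 = 5) (hp2 : p 2 = 25)
    (hp : ∀ n, p (n + 3) = 5 * p (n + 2) - 4 * p (n + 1) + 4 * p n) :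
    ∀ n, p (n + 2) ≤ 5 * p (n + 1)
  | 0 => by simp only [hp1, hp2]; norm_num
  | n + 1 => by
    obtain ⟨h₀, h₁⟩ := para_nonneg_and_four_mul_le_succ hp0 hp1 hp2 hp n
    linarith [hp n]

theorem para_two_mul_succ_le_nine_mul (hp0 : p 0 = 1) (hp1 : p 1 = 5) (hp2 : p 2 = 25)
    (hp : ∀ n, p (n + 3) = 5 * p (n + 2) - 4 * p (n + 1) + 4 * p n) (n : ℕ) :
    2 * p (n + 3) ≤ 9 * p (n + 2) := by
  obtain ⟨h₀, h₁⟩ := para_nonneg_and_four_mul_le_succ hp0 hp1 hp2 hp n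
  linarith [hp n, para_succ_le_five_mul hp0 hp1 hp2 hp n]

end Para

section Ortho

variable {o : ℕ → ℤ}

theorem ortho_nonneg_and_four_mul_succ_add_le (ho0 : o 0 = 1) (ho1 : o 1 = 5) (ho2 : o 2 = 25)
    (ho : ∀ n, o (n + 3) = 4 * o (n + 2) + 4 * o (n + 1) + o n) (n : ℕ) :
    0 ≤ o n ∧ 0 ≤ o (n + 1) ∧ 4 * o (n + 1) + o n ≤ o (n + 2) := by
  induction n with
  | zero => simp only [ho0, ho1, ho2]; norm_num
  | succ n ih =>
    obtain ⟨h₀, h₁, h₂⟩ := ih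
    exact ⟨h₁, by linarith, by linarith [ho n]⟩

theorem ortho_succ_le_five_mul (ho0 : o 0 = 1) (ho1 : o 1 = 5) (ho2 : o 2 = 25)
    (ho : ∀ n, o (n + 3) = 4 * o (n + 2) + 4 * o (n + 1) + o n) :
    ∀ n, o (n + 2) ≤ 5 * o (n + 1)
  | 0 => by simp only [ho1, ho2]; norm_num
  | n + 1 => by linarith [ho n, (ortho_nonneg_and_four_mul_succ_add_le ho0 ho1 ho2 ho n).2.2]

theorem ortho_nine_mul_le_two_mul_succ (ho0 : o 0 = 1) (ho1 : o 1 = 5) (ho2 : o 2 = 25)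
    (ho : ∀ n, o (n + 3) = 4 * o (n + 2) + 4 * o (n + 1) + o n) (n : ℕ) :
    9 * o (n + 2) ≤ 2 * o (n + 3) := by
  obtain ⟨h₀, h₁, -⟩ := ortho_nonneg_and_four_mul_succ_add_le ho0 ho1 ho2 ho n
  linarith [ho n, ortho_succ_le_five_mul ho0 ho1 ho2 ho n]

end Ortho

theorem meta_five_mul_le_succ {m : ℕ → ℤ} (hm0 : m 0 = 1) (hm1 : m 1 = 5) (hm2 : m 2 = 25)
    (hm : ∀ n, m (n + 3) = 6 * m (n + 2) - 3 * m (n + 1) + 2 * m n) (n : ℕ) :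
    5 * m n ≤ m (n + 1) := by
  have window : ∀ n, 0 ≤ m n ∧ 5 * m n ≤ m (n + 1) ∧ 5 * m (n + 1) ≤ m (n + 2) := by
    intro n
    induction n with
    | zero => simp only [hm0, hm1, hm2]; norm_num
    | succ n ih =>
      obtain ⟨h₀, h₁, h₂⟩ := ih
      exact ⟨by linarith, h₂, by linarith [hm n]⟩
  exact (window n).2.1

theorem stmt_9 (p m o : ℕ → ℤ)
    (hp0 : p 0 = 1) (hp1 : p 1 = 5) (hp2 : p 2 = 25)
    (hm0 : m 0 = 1) (hm1 : m 1 = 5) (hm2 : m 2 = 25)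
    (ho0 : o 0 = 1) (ho1 : o 1 = 5) (ho2 : o 2 = 25)
    (hp : ∀ n, 3 ≤ n → p n = 5 * p (n - 1) - 4 * p (n - 2) + 4 * p (n - 3))
    (ho : ∀ n, 3 ≤ n → o n = 4 * o (n - 1) + 4 * o (n - 2) + o (n - 3))
    (hm : ∀ n, 3 ≤ n → m n = 6 * m (n - 1) - 3 * m (n - 2) + 2 * m (n - 3)) :
    ∀ n, p n ≤ o n ∧ o n ≤ m n := by
  have hp' : ∀ n, p (n + 3) = 5 * p (n + 2) - 4 * p (n + 1) + 4 * p n := fun n => by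
    simpa using hp (n + 3) (by omega)
  have ho' : ∀ n, o (n + 3) = 4 * o (n + 2) + 4 * o (n + 1) + o n := fun n => by
    simpa using ho (n + 3) (by omega)
  have hm' : ∀ n, m (n + 3) = 6 * m (n + 2) - 3 * m (n + 1) + 2 * m n := fun n => by
    simpa using hm (n + 3) (by omega)
  have hpo : ∀ k, p (k + 2) ≤ o (k + 2) :=
    le_of_mul_succ_le (a := fun k => p (k + 2)) (b := fun k => o (k + 2)) (c := 2) (d := 9)
      (by norm_num) (by norm_num) (by rw [hp2, ho2]) (para_two_mul_succ_le_nine_mul hp0 hp1 hp2 hp')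
      (ortho_nine_mul_le_two_mul_succ ho0 ho1 ho2 ho')
  have hom : ∀ k, o (k + 2) ≤ m (k + 2) :=
    le_of_mul_succ_le (a := fun k => o (k + 2)) (b := fun k => m (k + 2)) (c := 1) (d := 5)
      (by norm_num) (by norm_num) (by rw [ho2, hm2])
      (fun k => by simpa using ortho_succ_le_five_mul ho0 ho1 ho2 ho' (k + 1))
      (fun k => by simpa using meta_five_mul_le_succ hm0 hm1 hm2 hm' (k + 2))
  intro n
  obtain hn | hn := Nat.lt_or_ge n 2
  · interval_cases n <;> simp [hp0, hp1, ho0, ho1, hm0, hm1]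
  obtain ⟨k, rfl⟩ := Nat.exists_eq_add_of_le' hn
  exact ⟨hpo k, hom k⟩
end

section
/- Let (z_n) be defined by z_0 = 1, z_1 = 5, z_2 = 20, z_3 = 75, z_4 = 288, z_5 = 1105, z_6 = 4234 and z_n = 3 z_{n-1} + z_{n-2} + 6 z_{n-3} + 7 z_{n-4} + 7 z_{n-5} + 5 z_{n-6} + z_{n-7} for n ≥ 7. Then (1 - 3x - x^2 - 6x^3 - 7x^4 - 7x^5 - 5x^6 - x^7) · (Σ_{n≥0} z_n x^n) = 1 + 2x + 4x^2 + 4x^3 + 6x^4 + 4x^5 + x^6 as formal power series over ℤ. -/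
/-!
Multiplying the generating function of `z` by the characteristic polynomial of the recurrence
kills every coefficient of degree at least the order `7` of the recurrence, so the product is a
polynomial of degree at most `6`, whose coefficients are read off from `z 0, …, z 6`.
-/

open PowerSeries Finset

namespace PowerSeries

variable {R : Type*} [Semiring R]

theorem coeff_ofNat_mul (k n : ℕ) [k.AtLeastTwo] (f : R⟦X⟧) :
    coeff n ((no_index (OfNat.ofNat k : R⟦X⟧)) * f) = OfNat.ofNat k * coeff n f := by
  rw [← map_ofNat C, coeff_C_mul]

theorem coeff_mul_eq_sum_range (n : ℕ) (φ ψ : R⟦X⟧) :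
    coeff n (φ * ψ) = ∑ i ∈ range (n + 1), coeff i φ * coeff (n - i) ψ := by
  rw [coeff_mul, Nat.sum_antidiagonal_eq_sum_range_succ_mk]

theorem coeff_mul_eq_sum_range_of_coeff_eq_zero {φ : R⟦X⟧} {d : ℕ}
    (hφ : ∀ i, d < i → coeff i φ = 0) (ψ : R⟦X⟧) {n : ℕ} (hn : d ≤ n) :
    coeff n (φ * ψ) = ∑ i ∈ range (d + 1), coeff i φ * coeff (n - i) ψ := by
  rw [coeff_mul_eq_sum_range]
  refine (sum_subset (range_subset_range.mpr (by omega)) fun i _ hi => ?_).symm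
  rw [hφ i (by simpa using hi), zero_mul]

theorem coeff_mul_mk_eq_zero_of_recurrence {φ : R⟦X⟧} {d : ℕ}
    (hφ : ∀ i, d < i → coeff i φ = 0) {z : ℕ → R}
    (hz : ∀ n, d ≤ n → ∑ i ∈ range (d + 1), coeff i φ * z (n - i) = 0) {n : ℕ} (hn : d ≤ n) :
    coeff n (φ * mk z) = 0 := by
  simpa [coeff_mul_eq_sum_range_of_coeff_eq_zero hφ _ hn] using hz n hn

end PowerSeries

theorem stmt_14 (z : ℕ → ℤ)
    (h0 : z 0 = 1) (h1 : z 1 = 5) (h2 : z 2 = 20) (h3 : z 3 = 75) (h4 : z 4 = 288)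
    (h5 : z 5 = 1105) (h6 : z 6 = 4234)
    (hrec : ∀ n, 7 ≤ n → z n = 3 * z (n - 1) + z (n - 2) + 6 * z (n - 3)
      + 7 * z (n - 4) + 7 * z (n - 5) + 5 * z (n - 6) + z (n - 7)) :
    (1 - 3 * X - X ^ 2 - 6 * X ^ 3 - 7 * X ^ 4 - 7 * X ^ 5 - 5 * X ^ 6 - X ^ 7 :
        PowerSeries ℤ) * PowerSeries.mk z
      = 1 + 2 * X + 4 * X ^ 2 + 4 * X ^ 3 + 6 * X ^ 4 + 4 * X ^ 5 + X ^ 6 := by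
  set φ : ℤ⟦X⟧ := 1 - 3 * X - X ^ 2 - 6 * X ^ 3 - 7 * X ^ 4 - 7 * X ^ 5 - 5 * X ^ 6 - X ^ 7
  have hφ : ∀ i, 7 < i → coeff i φ = 0 := fun i hi => by
    simp only [φ, map_sub, coeff_one, coeff_ofNat_mul, coeff_X, coeff_X_pow, mul_ite, mul_one,
      mul_zero]
    omega
  have hz : ∀ n, 7 ≤ n → ∑ i ∈ range 8, coeff i φ * z (n - i) = 0 := fun n hn => by
    simp [φ, sum_range_succ, coeff_ofNat_mul, coeff_X, coeff_X_pow, coeff_one]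
    linarith [hrec n hn]
  ext n
  rcases lt_or_ge n 7 with hn | hn
  · rw [coeff_mul_eq_sum_range]
    interval_cases n <;>
      simp only [φ, sum_range_succ, map_add, map_sub, coeff_ofNat_mul, coeff_X, coeff_X_pow,
        coeff_one, coeff_mk] <;>
      simp [h0, h1, h2, h3, h4, h5, h6]
  · rw [coeff_mul_mk_eq_zero_of_recurrence hφ hz hn]
    simp only [map_add, coeff_one, coeff_ofNat_mul, coeff_X, coeff_X_pow, mul_ite, mul_one,
      mul_zero]
    omega
end

section
/- Let (h_n) be defined by h_0 = 1, h_1 = 5, h_2 = 20, h_3 = 75, h_4 = 288, h_5 = 1094, h_6 = 4171 and h_n = h_{n-1} + 7 h_{n-2} + 12 h_{n-3} + 6 h_{n-4} + 7 h_{n-5} + 4 h_{n-6} + 2 h_{n-7} for n ≥ 7. Then (1 - x - 7x^2 - 12x^3 - 6x^4 - 7x^5 - 4x^6 - 2x^7) · (Σ_{n≥0} h_n x^n) = 1 + 4x + 8x^2 + 8x^3 + 7x^4 + 4x^5 + 2x^6 as formal power series over ℤ. -/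
/-!
Multiplying the generating function of a sequence satisfying an order-`d` linear recurrence
by `1 - ∑ cᵢ X^(i+1)` kills every coefficient of degree `≥ d`, since there the `n`-th
coefficient is exactly `hₙ - ∑ cᵢ hₙ₋ᵢ₋₁`. The seven remaining coefficients are computed from
the initial values.
-/

open PowerSeries

namespace PowerSeries

variable {R : Type*} [CommRing R]

theorem coeff_ofNat_mul_s15 (a : ℕ) [a.AtLeastTwo] (φ : R⟦X⟧) (n : ℕ) :
    coeff n (ofNat(a) * φ) = ofNat(a) * coeff n φ := by
  rw [← map_ofNat C a, coeff_C_mul]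

theorem coeff_one_sub_sum_mul_mk {d : ℕ} (c : Fin d → R) (h : ℕ → R) (n : ℕ) :
    coeff n ((1 - ∑ i : Fin d, C (c i) * X ^ (i + 1 : ℕ)) * mk h)
      = h n - ∑ i : Fin d, if (i : ℕ) + 1 ≤ n then c i * h (n - (i + 1)) else 0 := by
  simp only [sub_mul, one_mul, Finset.sum_mul, mul_assoc, map_sub, map_sum, coeff_C_mul,
    coeff_X_pow_mul', coeff_mk, mul_ite, mul_zero]

theorem coeff_one_sub_sum_mul_mk_eq_zero {d : ℕ} (c : Fin d → R) (h : ℕ → R) {n : ℕ}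
    (hn : d ≤ n) (hrec : h n = ∑ i : Fin d, c i * h (n - (i + 1))) :
    coeff n ((1 - ∑ i : Fin d, C (c i) * X ^ (i + 1 : ℕ)) * mk h) = 0 := by
  rw [coeff_one_sub_sum_mul_mk, hrec, sub_eq_zero]
  exact Finset.sum_congr rfl fun i _ => (if_pos (by omega)).symm

end PowerSeries

theorem stmt_15 (h : ℕ → ℤ)
    (h0 : h 0 = 1) (h1 : h 1 = 5) (h2 : h 2 = 20) (h3 : h 3 = 75) (h4 : h 4 = 288)
    (h5 : h 5 = 1094) (h6 : h 6 = 4171)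
    (hrec : ∀ n, 7 ≤ n → h n = h (n - 1) + 7 * h (n - 2) + 12 * h (n - 3)
      + 6 * h (n - 4) + 7 * h (n - 5) + 4 * h (n - 6) + 2 * h (n - 7)) :
    (1 - X - 7 * X ^ 2 - 12 * X ^ 3 - 6 * X ^ 4 - 7 * X ^ 5 - 4 * X ^ 6 - 2 * X ^ 7 :
        PowerSeries ℤ) * PowerSeries.mk h
      = 1 + 4 * X + 8 * X ^ 2 + 8 * X ^ 3 + 7 * X ^ 4 + 4 * X ^ 5 + 2 * X ^ 6 := by
  set c : Fin 7 → ℤ := ![1, 7, 12, 6, 7, 4, 2]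
  have hP : (1 - X - 7 * X ^ 2 - 12 * X ^ 3 - 6 * X ^ 4 - 7 * X ^ 5 - 4 * X ^ 6 - 2 * X ^ 7 :
      PowerSeries ℤ) = 1 - ∑ i : Fin 7, C (c i) * X ^ (i + 1 : ℕ) := by
    simp [c, Fin.sum_univ_succ, sub_sub, add_assoc]
  ext n
  rw [hP]
  rcases lt_or_ge n 7 with hn | hn
  · rw [coeff_one_sub_sum_mul_mk]
    interval_cases n <;>
      simp [c, Fin.sum_univ_succ, coeff_ofNat_mul_s15, coeff_X_pow, coeff_X, coeff_one, *]
  · rw [coeff_one_sub_sum_mul_mk_eq_zero c h hn]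
    · simp only [map_add, coeff_ofNat_mul_s15, coeff_X_pow, coeff_X, coeff_one]
      split_ifs <;> omega
    · simp [c, Fin.sum_univ_succ, add_assoc, hrec n hn]
end

section
/- Let (ℓ_n) and (z_n) be the integer sequences defined by ℓ_0 = 1, ℓ_1 = 5, ℓ_2 = 20, ℓ_3 = 79, ℓ_4 = 317, ℓ_n = 4 ℓ_{n-1} + ℓ_{n-4} + ℓ_{n-5} (n ≥ 5), and z_0 = 1, z_1 = 5, z_2 = 20, z_3 = 75, z_4 = 288, z_5 = 1105, z_6 = 4234, z_n = 3 z_{n-1} + z_{n-2} + 6 z_{n-3} + 7 z_{n-4} + 7 z_{n-5} + 5 z_{n-6} + z_{n-7} (n ≥ 7). Then z_n ≤ ℓ_n for all n. -/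
/-!
Both sequences grow by a factor of about `4`, and the comparison goes through the ratio `4`:
`ℓ (n+1) ≥ 4 ℓ n` is immediate from the recurrence and positivity, while for `z` one proves by a
joint induction that `7/2 ≤ z (n+1) / z n ≤ 4`. The lower ratio bound makes the lower-order terms
of the `z`-recurrence sum to less than `z n`, which gives the upper one, and the upper ratio bound
in turn makes them sum to at least `z n / 2`, which gives the lower one. From `z 4 ≤ ℓ 4` the
inequality then propagates.
-/

theorem le_of_succ_le_mul_of_mul_le_succ {R : Type*} [Semiring R] [PartialOrder R]
    [IsOrderedRing R] {c : R} (hc : 0 ≤ c) {z l : ℕ → R} {N : ℕ} (hN : z N ≤ l N)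
    (hz : ∀ n, N ≤ n → z (n + 1) ≤ c * z n) (hl : ∀ n, N ≤ n → c * l n ≤ l (n + 1)) :
    ∀ n, N ≤ n → z n ≤ l n := by
  intro n hn
  induction n, hn using Nat.le_induction with
  | base => exact hN
  | succ n hn ih =>
    calc z (n + 1) ≤ c * z n := hz n hn
      _ ≤ c * l n := mul_le_mul_of_nonneg_left ih hc
      _ ≤ l (n + 1) := hl n hn

namespace Polyacene

variable {l : ℕ → ℤ} (hl : ∀ m, l (m + 5) = 4 * l (m + 4) + l (m + 1) + l m)
include hl

theorem pos (hl₀ : ∀ i < 5, 0 < l i) : ∀ n, 0 < l n := by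
  intro n
  induction n using Nat.strong_induction_on with
  | _ n ih =>
    match n with
    | 0 | 1 | 2 | 3 | 4 => exact hl₀ _ (by omega)
    | m + 5 =>
      rw [hl m]
      linarith [ih (m + 4) (by omega), ih (m + 1) (by omega), ih m (by omega)]

theorem four_mul_le_succ (hl₀ : ∀ i < 5, 0 < l i) (n : ℕ) (hn : 4 ≤ n) :
    4 * l n ≤ l (n + 1) := by
  obtain ⟨m, rfl⟩ : ∃ m, n = m + 4 := ⟨n - 4, by omega⟩
  rw [hl m]
  linarith [pos hl hl₀ (m + 1), pos hl hl₀ m]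

end Polyacene

namespace ZigZag

variable {z : ℕ → ℤ}
  (hz : ∀ m, z (m + 7) = 3 * z (m + 6) + z (m + 5) + 6 * z (m + 4) + 7 * z (m + 3)
    + 7 * z (m + 2) + 5 * z (m + 1) + z m)
include hz

/-- With all ratios at least `7/2`, the tail `z (m+5) + 6 z (m+4) + ⋯ + z m` is at most
`(2/7 + 6 (2/7)² + ⋯ + (2/7)⁶) z (m+6) < z (m+6)`. -/
theorem succ_le_four_mul_of_ratio_ge (m : ℕ) (h₀ : 0 < z m)
    (h : ∀ i < 6, 7 * z (m + i) ≤ 2 * z (m + i + 1)) : z (m + 7) ≤ 4 * z (m + 6) := by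
  have := h 0 (by omega); have := h 1 (by omega); have := h 2 (by omega)
  have := h 3 (by omega); have := h 4 (by omega); have := h 5 (by omega)
  simp only [add_zero] at *
  rw [hz m]
  linarith

theorem ratio_ge_of_succ_le_four_mul (m : ℕ) (h₀ : ∀ i < 4, 0 ≤ z (m + i))
    (h₅ : z (m + 5) ≤ 4 * z (m + 4)) (h₆ : z (m + 6) ≤ 4 * z (m + 5)) (h₆₀ : 0 ≤ z (m + 6)) :
    7 * z (m + 6) ≤ 2 * z (m + 7) := by
  have := h₀ 0 (by omega); have := h₀ 1 (by omega)
  have := h₀ 2 (by omega); have := h₀ 3 (by omega)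
  simp only [add_zero] at *
  rw [hz m]
  linarith

theorem ratio_bounds (hz₀ : z 0 = 1) (hz₁ : z 1 = 5) (hz₂ : z 2 = 20) (hz₃ : z 3 = 75)
    (hz₄ : z 4 = 288) (hz₅ : z 5 = 1105) (hz₆ : z 6 = 4234) (n : ℕ) :
    0 < z n ∧ 7 * z n ≤ 2 * z (n + 1) ∧ (1 ≤ n → z (n + 1) ≤ 4 * z n) := by
  induction n using Nat.strong_induction_on with
  | _ n ih =>
    match n with
    | 0 | 1 | 2 | 3 | 4 | 5 => simp [*]
    | m + 6 =>
      have hlow : ∀ i < 6, 7 * z (m + i) ≤ 2 * z (m + i + 1) :=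
        fun i hi => (ih (m + i) (by omega)).2.1
      have hpos : ∀ i < 6, 0 < z (m + i) := fun i hi => (ih (m + i) (by omega)).1
      have hpos₆ : 0 < z (m + 6) := by linarith [hpos 5 (by omega), hlow 5 (by omega)]
      have h₅ := (ih (m + 4) (by omega)).2.2 (by omega)
      have h₆ := (ih (m + 5) (by omega)).2.2 (by omega)
      exact ⟨hpos₆,
        ratio_ge_of_succ_le_four_mul hz m (fun i hi => (hpos i (by omega)).le) h₅ h₆ hpos₆.le,
        fun _ => succ_le_four_mul_of_ratio_ge hz m (by simpa using hpos 0 (by omega)) hlow⟩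

end ZigZag

theorem stmt_16 (l z : ℕ → ℤ)
    (hl0 : l 0 = 1) (hl1 : l 1 = 5) (hl2 : l 2 = 20) (hl3 : l 3 = 79) (hl4 : l 4 = 317)
    (hlrec : ∀ n, 5 ≤ n → l n = 4 * l (n - 1) + l (n - 4) + l (n - 5))
    (hz0 : z 0 = 1) (hz1 : z 1 = 5) (hz2 : z 2 = 20) (hz3 : z 3 = 75) (hz4 : z 4 = 288)
    (hz5 : z 5 = 1105) (hz6 : z 6 = 4234)
    (hzrec : ∀ n, 7 ≤ n → z n = 3 * z (n - 1) + z (n - 2) + 6 * z (n - 3)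
      + 7 * z (n - 4) + 7 * z (n - 5) + 5 * z (n - 6) + z (n - 7)) :
    ∀ n, z n ≤ l n := by
  have hl : ∀ m, l (m + 5) = 4 * l (m + 4) + l (m + 1) + l m :=
    fun m => by simpa using hlrec (m + 5) (by omega)
  have hz : ∀ m, z (m + 7) = 3 * z (m + 6) + z (m + 5) + 6 * z (m + 4) + 7 * z (m + 3)
      + 7 * z (m + 2) + 5 * z (m + 1) + z m :=
    fun m => by simpa using hzrec (m + 7) (by omega)
  have hl₀ : ∀ i < 5, 0 < l i := by
    intro i hi
    interval_cases i <;> simp [*]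
  intro n
  rcases le_or_gt n 4 with hn | hn
  · interval_cases n <;> simp [*]
  · refine le_of_succ_le_mul_of_mul_le_succ (by norm_num) (by simp [*]) (fun k hk => ?_)
      (Polyacene.four_mul_le_succ hl hl₀) n hn.le
    exact (ZigZag.ratio_bounds hz hz0 hz1 hz2 hz3 hz4 hz5 hz6 k).2.2 (by omega)
end
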